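/- Truth lemma for dS_fde^→: let Γ be a dS_fde^→-theory and v_Γ the valuation defined on propositional variables by v_Γ(p) = e(p,Γ). Then for every formula A, v_Γ(A) = e(A,Γ). -/
import Mathlib


inductive V4 : Type
  | T | B | N | F
deriving DecidableEq, Repr

def negS : V4 → V4
  | .T => .F
  | .B => .B
  | .N => .N
  | .F => .T

def andDA : V4 → V4 → V4
  | .T, y => y
  | .B, _ => .B
  | .N, .T => .N
  | .N, .B => .F
  | .N, .N => .N
  | .N, .F => .F
  | .F, _ => .F

def orDA : V4 → V4 → V4
  | .T, _ => .T
  | .B, _ => .B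
  | .N, .T => .T
  | .N, .B => .T
  | .N, .N => .N
  | .N, .F => .N
  | .F, y => y

inductive Fm : Type
  | var : Nat → Fm
  | neg : Fm → Fm
  | conj : Fm → Fm → Fm
  | disj : Fm → Fm → Fm

def eval (v : Nat → V4) : Fm → V4
  | .var p => v p
  | .neg A => negS (eval v A)
  | .conj A B => andDA (eval v A) (eval v B)
  | .disj A B => orDA (eval v A) (eval v B)

structure DTheory : Type where
  carrier : Set Fm
  proper : carrier ≠ Set.univ
  disj_elim : ∀ A B : Fm, Fm.disj A B ∈ carrier → A ∈ carrier ∨ B ∈ carrier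
  conj_elim : ∀ A B : Fm, Fm.conj A B ∈ carrier →
    (A ∈ carrier ∧ B ∈ carrier) ∨ (A ∈ carrier ∧ Fm.neg A ∈ carrier)
  nconj_elim : ∀ A B : Fm, Fm.neg (Fm.conj A B) ∈ carrier →
    Fm.neg A ∈ carrier ∨ Fm.neg B ∈ carrier
  ndisj_elim : ∀ A B : Fm, Fm.neg (Fm.disj A B) ∈ carrier →
    (Fm.neg A ∈ carrier ∧ Fm.neg B ∈ carrier) ∨ (A ∈ carrier ∧ Fm.neg A ∈ carrier)
  orI1 : ∀ A B : Fm, A ∈ carrier → Fm.disj A B ∈ carrier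
  orI2 : ∀ A B : Fm, B ∈ carrier → Fm.disj A B ∈ carrier
  andI : ∀ A B : Fm, A ∈ carrier → B ∈ carrier → Fm.conj A B ∈ carrier
  andI2 : ∀ A B : Fm, A ∈ carrier → Fm.neg A ∈ carrier → Fm.conj A B ∈ carrier
  nnI : ∀ A : Fm, A ∈ carrier → Fm.neg (Fm.neg A) ∈ carrier
  nnE : ∀ A : Fm, Fm.neg (Fm.neg A) ∈ carrier → A ∈ carrier
  nandI1 : ∀ A B : Fm, Fm.neg A ∈ carrier → Fm.neg (Fm.conj A B) ∈ carrier
  nandI2 : ∀ A B : Fm, Fm.neg B ∈ carrier → Fm.neg (Fm.conj A B) ∈ carrier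
  norI : ∀ A B : Fm, Fm.neg A ∈ carrier → Fm.neg B ∈ carrier →
    Fm.neg (Fm.disj A B) ∈ carrier
  norI2 : ∀ A B : Fm, A ∈ carrier → Fm.neg A ∈ carrier →
    Fm.neg (Fm.disj A B) ∈ carrier

open Classical in
noncomputable def elemhood (G : DTheory) (A : Fm) : V4 :=
  if A ∈ G.carrier then
    (if Fm.neg A ∈ G.carrier then V4.B else V4.T)
  else
    (if Fm.neg A ∈ G.carrier then V4.F else V4.N)

lemma nneg_mem (G : DTheory) (A : Fm) :
    Fm.neg (Fm.neg A) ∈ G.carrier ↔ A ∈ G.carrier :=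
  ⟨G.nnE A, G.nnI A⟩

lemma conj_mem (G : DTheory) (A B : Fm) :
    Fm.conj A B ∈ G.carrier ↔
      (A ∈ G.carrier ∧ B ∈ G.carrier) ∨ (A ∈ G.carrier ∧ Fm.neg A ∈ G.carrier) :=
  ⟨G.conj_elim A B, fun h => h.elim (fun ⟨h1, h2⟩ => G.andI A B h1 h2)
    (fun ⟨h1, h2⟩ => G.andI2 A B h1 h2)⟩

lemma nconj_mem (G : DTheory) (A B : Fm) :
    Fm.neg (Fm.conj A B) ∈ G.carrier ↔
      Fm.neg A ∈ G.carrier ∨ Fm.neg B ∈ G.carrier :=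
  ⟨G.nconj_elim A B, fun h => h.elim (G.nandI1 A B) (G.nandI2 A B)⟩

lemma disj_mem (G : DTheory) (A B : Fm) :
    Fm.disj A B ∈ G.carrier ↔ A ∈ G.carrier ∨ B ∈ G.carrier :=
  ⟨G.disj_elim A B, fun h => h.elim (G.orI1 A B) (G.orI2 A B)⟩

lemma ndisj_mem (G : DTheory) (A B : Fm) :
    Fm.neg (Fm.disj A B) ∈ G.carrier ↔
      (Fm.neg A ∈ G.carrier ∧ Fm.neg B ∈ G.carrier) ∨
        (A ∈ G.carrier ∧ Fm.neg A ∈ G.carrier) :=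
  ⟨G.ndisj_elim A B, fun h => h.elim (fun ⟨h1, h2⟩ => G.norI A B h1 h2)
    (fun ⟨h1, h2⟩ => G.norI2 A B h1 h2)⟩

theorem truth_lemma (G : DTheory) (A : Fm) :
    eval (fun p => elemhood G (Fm.var p)) A = elemhood G A := by
  induction A with
  | var p => rfl
  | neg A ih =>
    simp only [eval, ih]
    unfold elemhood
    by_cases h1 : A ∈ G.carrier <;> by_cases h2 : Fm.neg A ∈ G.carrier <;>
      simp [h1, h2, nneg_mem, negS]
  | conj A B ihA ihB =>
    simp only [eval, ihA, ihB]
    unfold elemhood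
    by_cases hA : A ∈ G.carrier <;> by_cases hnA : Fm.neg A ∈ G.carrier <;>
      by_cases hB : B ∈ G.carrier <;> by_cases hnB : Fm.neg B ∈ G.carrier <;>
      simp [hA, hnA, hB, hnB, conj_mem, nconj_mem, andDA]
  | disj A B ihA ihB =>
    simp only [eval, ihA, ihB]
    unfold elemhood
    by_cases hA : A ∈ G.carrier <;> by_cases hnA : Fm.neg A ∈ G.carrier <;>
      by_cases hB : B ∈ G.carrier <;> by_cases hnB : Fm.neg B ∈ G.carrier <;>
      simp [hA, hnA, hB, hnB, disj_mem, ndisj_mem, orDA]
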